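/- arXiv:1805.03331 — 2 statements merged into one kernel-verified Lean document; each statement's English description precedes it below -/
import Mathlib

section
/- Let (L, Q) be a quadratic lattice over 𝔬 with Jordan splitting ⊕_j L_j and let i be an integer with L_i ≠ 0. Let Bⁱ ∈ ℋₙᴺᴰ(𝔬) be any reduced form representing (L ∩ 2^i L♯, 2^{−i}Q), let l and m be the numbers of entries of GK(Bⁱ) equal to 0 and to 1 respectively, and partition Bⁱ into a 3×3 block matrix (Bⁱ_{st})_{0≤s,t≤2} with diagonal block sizes l, m, n−l−m. Then: Bⁱ₀₀ is a reduced form all of whose Gross–Keating entries are 0; Bⁱ₁₁ is a reduced form all of whose Gross–Keating entries are 1; the upper-left (l+m)×(l+m) block [[Bⁱ₀₀, Bⁱ₀₁],[Bⁱ₁₀, Bⁱ₁₁]] is a reduced form whose Gross–Keating entries all lie in {0, 1}; and every entry of GK(Bⁱ₂₂) is at least 2. -/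
open scoped Classical

noncomputable section

namespace GK

variable {F : Type} [Field F]

/-- The axioms making `(F, O, ord)` a nonarchimedean local field of characteristic zero
(i.e. a finite extension of `ℚ_p`): `ord` is a surjective discrete valuation, `O` is its
valuation ring, the residue field is finite of cardinality `q` and of characteristic `p`,
and `O` is complete. -/
structure LocalFieldAxioms (O : Subring F) (ord : F → ℤ) (p q : ℕ) : Prop where
  ord_mul : ∀ x y : F, x ≠ 0 → y ≠ 0 → ord (x * y) = ord x + ord y
  min_le_ord_add : ∀ x y : F, x ≠ 0 → y ≠ 0 → x + y ≠ 0 → min (ord x) (ord y) ≤ ord (x + y)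
  ord_surjective : ∀ k : ℤ, ∃ x : F, x ≠ 0 ∧ ord x = k
  mem_integers : ∀ x : F, x ∈ O ↔ x = 0 ∨ 0 ≤ ord x
  charZero : CharZero F
  p_prime : Nat.Prime p
  ord_p_pos : 0 < ord (p : F)
  residue_card : ∃ S : Finset F, S.card = q ∧ (∀ x ∈ S, x ∈ O) ∧
    (∀ x : F, x ∈ O → ∃ y ∈ S, x - y = 0 ∨ 1 ≤ ord (x - y)) ∧
    ∀ y ∈ S, ∀ z ∈ S, (y - z = 0 ∨ 1 ≤ ord (y - z)) → y = z
  complete : ∀ x : ℕ → F, (∀ k, x k ∈ O) →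
    (∀ k : ℕ, x (k+1) - x k = 0 ∨ (k : ℤ) ≤ ord (x (k+1) - x k)) →
    ∃ L : F, L ∈ O ∧ ∀ k : ℕ, x k - L = 0 ∨ (k : ℤ) ≤ ord (x k - L)

/-- `x` lies in `c • O`. -/
def MemScale (O : Subring F) (c x : F) : Prop := ∃ w, w ∈ O ∧ x = c * w

/-- A half-integral symmetric matrix: symmetric, integral diagonal, and
twice every entry is integral. -/
def HalfIntegral (O : Subring F) {n : ℕ} (B : Matrix (Fin n) (Fin n) F) : Prop :=
  B.IsSymm ∧ (∀ i, B i i ∈ O) ∧ ∀ i j, 2 * B i j ∈ O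

/-- `U ∈ GLₙ(O)`: entries in `O` and determinant a unit of `O`. -/
def IsGLO (O : Subring F) (ord : F → ℤ) {n : ℕ} (U : Matrix (Fin n) (Fin n) F) : Prop :=
  (∀ i j, U i j ∈ O) ∧ U.det ≠ 0 ∧ ord U.det = 0

/-- `GLₙ(O)`-equivalence of matrices: `B' = ᵗU · B · U`. -/
def EquivO (O : Subring F) (ord : F → ℤ) {n : ℕ} (B B' : Matrix (Fin n) (Fin n) F) : Prop :=
  ∃ U : Matrix (Fin n) (Fin n) F, IsGLO O ord U ∧ B' = U.transpose * B * U

/-- `a ∈ S(B)` : a non-decreasing sequence of naturals with `ord (B i i) ≥ a i` and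
`ord (2 B i j) ≥ (a i + a j)/2`. -/
def InS (ord : F → ℤ) {n : ℕ} (B : Matrix (Fin n) (Fin n) F) (a : Fin n → ℕ) : Prop :=
  Monotone a ∧ (∀ i, B i i = 0 ∨ (a i : ℤ) ≤ ord (B i i)) ∧
    ∀ i j, 2 * B i j = 0 ∨ (a i : ℤ) + (a j : ℤ) ≤ 2 * ord (2 * B i j)

/-- The union of the `S(ᵗU·B·U)` over all `U ∈ GLₙ(O)`. -/
def GKSet (O : Subring F) (ord : F → ℤ) {n : ℕ} (B : Matrix (Fin n) (Fin n) F) :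
    Set (Fin n → ℕ) :=
  {a | ∃ B', EquivO O ord B B' ∧ InS ord B' a}

/-- Lexicographic comparison of sequences. -/
def LexLE {n : ℕ} (a b : Fin n → ℕ) : Prop :=
  a = b ∨ ∃ k, (∀ j, j < k → a j = b j) ∧ a k < b k

/-- `a` is the Gross–Keating invariant of `B` : the lexicographically greatest
element of `⋃_U S(ᵗU·B·U)`. -/
def IsGK (O : Subring F) (ord : F → ℤ) {n : ℕ} (B : Matrix (Fin n) (Fin n) F)
    (a : Fin n → ℕ) : Prop :=
  a ∈ GKSet O ord B ∧ ∀ b ∈ GKSet O ord B, LexLE b a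

/-- Orthogonal (block diagonal) sum of two square matrices. -/
def orthSum {m k : ℕ} (A : Matrix (Fin m) (Fin m) F) (B : Matrix (Fin k) (Fin k) F) :
    Matrix (Fin (m + k)) (Fin (m + k)) F :=
  Matrix.reindex finSumFinEquiv finSumFinEquiv (Matrix.fromBlocks A 0 0 B)

/-- The congruence condition `ᵗX·B·X − B ∈ 𝔭^N · ℋₙ(𝔬)` for a matrix `X` with
entries in `O`. -/
def DensCond (O : Subring F) (ord : F → ℤ) {n : ℕ}
    (B X : Matrix (Fin n) (Fin n) F) (N : ℕ) : Prop :=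
  (∀ i j, X i j ∈ O) ∧
  (∀ i, (X.transpose * B * X - B) i i = 0 ∨
      (N : ℤ) ≤ ord ((X.transpose * B * X - B) i i)) ∧
  ∀ i j, 2 * (X.transpose * B * X - B) i j = 0 ∨
      (N : ℤ) ≤ ord (2 * (X.transpose * B * X - B) i j)

/-- The number of solutions `X ∈ Mₙ(𝔬/𝔭^N)` of `ᵗX·B·X ≡ B mod 𝔭^N ℋₙ(𝔬)`,
counted as residue classes mod `𝔭^N` of integral matrix solutions. -/
def densCount (O : Subring F) (ord : F → ℤ) {n : ℕ}
    (B : Matrix (Fin n) (Fin n) F) (N : ℕ) : ℕ :=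
  Nat.card (Quot (fun X Y : {X : Matrix (Fin n) (Fin n) F // DensCond O ord B X N} =>
    ∀ i j, X.1 i j - Y.1 i j = 0 ∨ (N : ℤ) ≤ ord (X.1 i j - Y.1 i j)))

/-- `β` is the local density `β(L)` of the quadratic lattice with Gram matrix `B`:
`β = (1/2)·(q^N)^{-n(n-1)/2} · #{X ∈ Mₙ(𝔬/𝔭^N) : ᵗX·B·X ≡ B}` for all large `N`. -/
def IsLocalDensity (O : Subring F) (ord : F → ℤ) (q : ℕ) {n : ℕ}
    (B : Matrix (Fin n) (Fin n) F) (β : ℝ) : Prop :=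
  ∃ N₀ : ℕ, ∀ N ≥ N₀,
    β = (1/2) * (densCount O ord B N : ℝ) / ((q : ℝ) ^ (N * (n * (n-1) / 2)))

/-- A unimodular (Gram) matrix: integral entries and unit determinant. -/
def IsUnimodularMat (O : Subring F) (ord : F → ℤ) {ι : Type} [Fintype ι] [DecidableEq ι]
    (C : Matrix ι ι F) : Prop :=
  (∀ i j, C i j ∈ O) ∧ C.det ≠ 0 ∧ ord C.det = 0

/-- `C` is `π^i`-modular. -/
def IsModularMat (O : Subring F) (ord : F → ℤ) (π : F) {ι : Type} [Fintype ι] [DecidableEq ι]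
    (C : Matrix ι ι F) (i : ℤ) : Prop :=
  IsUnimodularMat O ord (π ^ (-i) • C)

/-- `B` is (the Gram matrix of) a Jordan splitting, the block of level `i`
consisting of the indices `s` with `m s = i`, and being `π^i`-modular. -/
def IsJordanMatrix (O : Subring F) (ord : F → ℤ) (π : F) {n : ℕ}
    (B : Matrix (Fin n) (Fin n) F) (m : Fin n → ℤ) : Prop :=
  (∀ s t, m s ≠ m t → B s t = 0) ∧
  ∀ i : ℤ, (∃ s, m s = i) →
    IsModularMat O ord π
      (B.submatrix (fun s : {s : Fin n // m s = i} => (s : Fin n))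
        (fun s : {s : Fin n // m s = i} => (s : Fin n))) i

/-- The `π^i`-modular Jordan component of the lattice with Gram matrix `B` is nonzero. -/
def HasJordanComponent (O : Subring F) (ord : F → ℤ) (π : F) {n : ℕ}
    (B : Matrix (Fin n) (Fin n) F) (i : ℤ) : Prop :=
  ∃ (B' : Matrix (Fin n) (Fin n) F) (m : Fin n → ℤ),
    EquivO O ord B B' ∧ IsJordanMatrix O ord π B' m ∧ ∃ s, m s = i

/-- number of indices in the level `i` Jordan block. -/
def jordanRank {n : ℕ} (m : Fin n → ℤ) (i : ℤ) : ℕ :=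
  (Finset.univ.filter fun s => m s = i).card

/-- The level `i` Jordan constituent of the Jordan matrix `B` has parity type I,
i.e. its norm ideal is all of `O` (some normalized diagonal entry is a unit). -/
def JordanTypeI (ord : F → ℤ) (π : F) {n : ℕ}
    (B : Matrix (Fin n) (Fin n) F) (m : Fin n → ℤ) (i : ℤ) : Prop :=
  ∃ s, m s = i ∧ π ^ (-i) * B s s ≠ 0 ∧ ord (π ^ (-i) * B s s) = 0

/-- The sublattice `L ∩ π^i L♯ = {x ∈ 𝔬ⁿ : ⟨x, L⟩ ⊆ π^i 𝔬}` of the lattice with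
Gram matrix `B`. -/
def DualCapLattice (O : Subring F) (π : F) {n : ℕ}
    (B : Matrix (Fin n) (Fin n) F) (i : ℤ) : Set (Fin n → F) :=
  {x | (∀ s, x s ∈ O) ∧ ∀ s, MemScale O (π ^ i) (B.mulVec x s)}

/-- `C` is a Gram matrix of the quadratic lattice `(L ∩ π^i L♯, π^{-i} Q)`. -/
def IsGramOfDualCap (O : Subring F) (π : F) {n : ℕ}
    (B : Matrix (Fin n) (Fin n) F) (i : ℤ) (C : Matrix (Fin n) (Fin n) F) : Prop :=
  ∃ W : Matrix (Fin n) (Fin n) F, W.det ≠ 0 ∧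
    (∀ t, (fun s => W s t) ∈ DualCapLattice O π B i) ∧
    (∀ x ∈ DualCapLattice O π B i, ∃ c : Fin n → F, (∀ t, c t ∈ O) ∧ x = W.mulVec c) ∧
    C = π ^ (-i) • (W.transpose * B * W)

/-- `σ` is an `a`-admissible involution (Ikeda–Katsurada). -/
def IsAdmissible {n : ℕ} (a : Fin n → ℕ) (σ : Fin n → Fin n) : Prop :=
  Monotone a ∧
  (∀ i, σ (σ i) = i) ∧
  -- `#P⁰ ≤ 2`
  (∀ i j k, σ i = i → σ j = j → σ k = k → i = j ∨ i = k ∨ j = k) ∧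
  -- distinct fixed points have values of different parities
  (∀ i j, σ i = i → σ j = j → i ≠ j → a i % 2 ≠ a j % 2) ∧
  -- maximality condition at fixed points
  (∀ i, σ i = i → ∀ j, (σ j = j ∨ a (σ j) < a j) → a j % 2 = a i % 2 → a j ≤ a i) ∧
  -- at most one element of `P⁺` in each block
  (∀ i j, a i = a j → a (σ i) < a i → a (σ j) < a j → i = j) ∧
  -- at most one element of `P⁻ ∪ P⁰` in each block
  (∀ i j, a i = a j → (a i < a (σ i) ∨ σ i = i) → (a j < a (σ j) ∨ σ j = j) → i = j) ∧
  -- the matching conditions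
  (∀ i, a i < a (σ i) → a (σ i) % 2 = a i % 2 ∧
    ∀ j, a (σ j) < a j → a i < a j → a j % 2 = a i % 2 → a (σ i) ≤ a j) ∧
  ∀ i, a (σ i) < a i →
    ∀ j, a j < a (σ j) → a j < a i → a j % 2 = a i % 2 → a j ≤ a (σ i)

/-- `B` is a reduced form of GK type `(a, σ)` (Ikeda–Katsurada). -/
def IsReducedForm (O : Subring F) (ord : F → ℤ) {n : ℕ}
    (B : Matrix (Fin n) (Fin n) F) (a : Fin n → ℕ) (σ : Fin n → Fin n) : Prop :=
  HalfIntegral O B ∧ B.det ≠ 0 ∧ InS ord B a ∧ IsAdmissible a σ ∧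
  (∀ i, σ i ≠ i → 2 * B i (σ i) ≠ 0 ∧ 2 * ord (2 * B i (σ i)) = (a i : ℤ) + (a (σ i) : ℤ)) ∧
  (∀ i, (σ i = i ∨ a i < a (σ i)) → B i i ≠ 0 ∧ ord (B i i) = (a i : ℤ)) ∧
  ∀ i j, j ≠ i → j ≠ σ i → 2 * B i j = 0 ∨ (a i : ℤ) + (a j : ℤ) < 2 * ord (2 * B i j)

/-- `D` is a nonzero square of `F`. -/
def IsSquareNZ (D : F) : Prop := ∃ c : F, c ≠ 0 ∧ D = c * c

/-- `F(√D)/F` is unramified (possibly trivial): `D` times a square is of the form `1 + 4t`,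
`t ∈ O`. -/
def UnramSqrt (O : Subring F) (D : F) : Prop :=
  ∃ c t : F, c ≠ 0 ∧ t ∈ O ∧ D * (c * c) = 1 + 4 * t

/-- `ζ = ξ_B` for a (nondegenerate) even-size half-integral `B`. -/
def XiIs (O : Subring F) {n : ℕ} (B : Matrix (Fin n) (Fin n) F) (ζ : ℤ) : Prop :=
  (IsSquareNZ ((-4 : F) ^ (n / 2) * B.det) ∧ ζ = 1) ∨
  (¬ IsSquareNZ ((-4 : F) ^ (n / 2) * B.det) ∧
    UnramSqrt O ((-4 : F) ^ (n / 2) * B.det) ∧ ζ = -1) ∨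
  (¬ IsSquareNZ ((-4 : F) ^ (n / 2) * B.det) ∧
    ¬ UnramSqrt O ((-4 : F) ^ (n / 2) * B.det) ∧ ζ = 0)

/-- the columns of `W` span a totally isotropic subspace for `B`. -/
def IsIsotropicSub {n k : ℕ} (B : Matrix (Fin n) (Fin n) F)
    (W : Matrix (Fin n) (Fin k) F) : Prop :=
  (∀ c : Fin k → F, W.mulVec c = 0 → c = 0) ∧ ∀ s t, (W.transpose * B * W) s t = 0

/-- `(Fⁿ, B)` is split: it has a totally isotropic subspace of dimension `⌊n/2⌋`. -/
def SplitSpace {n : ℕ} (B : Matrix (Fin n) (Fin n) F) : Prop :=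
  ∃ W : Matrix (Fin n) (Fin (n / 2)) F, IsIsotropicSub B W

/-- `ζ = η_B` for an odd-size nondegenerate `B`. -/
def EtaIs {n : ℕ} (B : Matrix (Fin n) (Fin n) F) (ζ : ℤ) : Prop :=
  (SplitSpace B ∧ ζ = 1) ∨ (¬ SplitSpace B ∧ ζ = -1)

/-- An extended Gross–Keating datum `(n₁,…,n_r; m₁,…,m_r; ζ₁,…,ζ_r)`. -/
def EGKDatum : Type := Σ r : ℕ, (Fin r → ℕ) × (Fin r → ℕ) × (Fin r → ℤ)

/-- leading principal `k × k` submatrix. -/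
def leadBlock {n : ℕ} (B : Matrix (Fin n) (Fin n) F) (k : ℕ) (h : k ≤ n) :
    Matrix (Fin k) (Fin k) F :=
  B.submatrix (Fin.castLE h) (Fin.castLE h)

/-- `dat = (n₁,…,n_r; m₁,…,m_r; ζ₁,…,ζ_r)` is the extended GK datum of the reduced
form `B` with `GK(B) = a`. -/
def IsEGKOfReduced (O : Subring F) {n : ℕ} (B : Matrix (Fin n) (Fin n) F)
    (a : Fin n → ℕ) (dat : EGKDatum) : Prop :=
  StrictMono dat.2.2.1 ∧
  (∀ s, 0 < dat.2.1 s) ∧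
  (∀ t : Fin n, ∃ s, a t = dat.2.2.1 s) ∧
  (∀ s, (Finset.univ.filter fun t => a t = dat.2.2.1 s).card = dat.2.1 s) ∧
  ∀ s : Fin dat.1,
    ∃ h : (∑ u ∈ Finset.univ.filter (fun u => u ≤ s), dat.2.1 u) ≤ n,
      ((∑ u ∈ Finset.univ.filter (fun u => u ≤ s), dat.2.1 u) % 2 = 0 →
        XiIs O (leadBlock B _ h) (dat.2.2.2 s)) ∧
      ((∑ u ∈ Finset.univ.filter (fun u => u ≤ s), dat.2.1 u) % 2 = 1 →
        EtaIs (leadBlock B _ h) (dat.2.2.2 s))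

/-- `dat` is the extended GK datum of (the lattice with Gram matrix) `B`. -/
def IsEGK (O : Subring F) (ord : F → ℤ) {n : ℕ} (B : Matrix (Fin n) (Fin n) F)
    (dat : EGKDatum) : Prop :=
  ∃ (B' : Matrix (Fin n) (Fin n) F) (a : Fin n → ℕ) (σ : Fin n → Fin n),
    EquivO O ord B B' ∧ IsReducedForm O ord B' a σ ∧ IsEGKOfReduced O B' a dat

/-- `dat` is the truncated extended GK datum `EGK(B)^{≤1}`: the EGK datum of the
upper-left block (of size the number of GK entries `≤ 1`) of a reduced form
equivalent to `B`. -/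
def IsEGKle1 (O : Subring F) (ord : F → ℤ) {n : ℕ} (B : Matrix (Fin n) (Fin n) F)
    (dat : EGKDatum) : Prop :=
  ∃ (B' : Matrix (Fin n) (Fin n) F) (a : Fin n → ℕ) (σ : Fin n → Fin n)
    (h : (Finset.univ.filter fun t => a t ≤ 1).card ≤ n),
    EquivO O ord B B' ∧ IsReducedForm O ord B' a σ ∧
    IsEGK O ord (leadBlock B' _ h) dat

/-- truncated EGK datum computed from a given reduced form `B` itself. -/
def TruncEGKOfReduced (O : Subring F) (ord : F → ℤ) {n : ℕ}
    (B : Matrix (Fin n) (Fin n) F) (dat : EGKDatum) : Prop :=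
  ∃ (a : Fin n → ℕ) (σ : Fin n → Fin n)
    (h : (Finset.univ.filter fun t => a t ≤ 1).card ≤ n),
    IsReducedForm O ord B a σ ∧ IsEGK O ord (leadBlock B _ h) dat

/-- `c` is the non-decreasing rearrangement of the concatenation of `a` and `b`. -/
def IsMergeOf {m k n : ℕ} (a : Fin m → ℕ) (b : Fin k → ℕ) (c : Fin n → ℕ) : Prop :=
  Monotone c ∧ ∃ φ : (Fin m ⊕ Fin k) ≃ Fin n, ∀ x, c (φ x) = Sum.elim a b x

/-- the value `Q(x) = ᵗx·C·x` of the quadratic form with Gram matrix `C`. -/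
def Qval {n : ℕ} (C : Matrix (Fin n) (Fin n) F) (x : Fin n → F) : F :=
  dotProduct x (C.mulVec x)

/-- the sublattice `B(A)` of `A = 𝔬ⁿ`: integral vectors with `Q(x) ∈ 2𝔬`. -/
def BAset (O : Subring F) {n : ℕ} (C : Matrix (Fin n) (Fin n) F) : Set (Fin n → F) :=
  {x | (∀ s, x s ∈ O) ∧ MemScale O 2 (Qval C x)}

/-- membership in the sublattice `Z(A)`: the radical of the quadratic form
`(1/2)Q mod 2` on `B(A)/2A`. -/
def InZA (O : Subring F) {n : ℕ} (C : Matrix (Fin n) (Fin n) F) (x : Fin n → F) : Prop :=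
  x ∈ BAset O C ∧ MemScale O 4 (Qval C x) ∧
    ∀ y ∈ BAset O C, MemScale O 2 (dotProduct x (C.mulVec y))

/-- the cardinality of the residue space `V̄ = B(A)/Z(A)`. -/
def residueSpaceCard (O : Subring F) {n : ℕ} (C : Matrix (Fin n) (Fin n) F) : ℕ :=
  Nat.card (Quot (fun x y : (BAset O C : Set (Fin n → F)) => InZA O C (x.1 - y.1)))

/-- the norm ideal of the lattice with Gram matrix `C` is all of `𝔬`. -/
def NormUnit (O : Subring F) (ord : F → ℤ) {n : ℕ} (C : Matrix (Fin n) (Fin n) F) : Prop :=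
  ∃ x : Fin n → F, (∀ s, x s ∈ O) ∧ Qval C x ≠ 0 ∧ ord (Qval C x) = 0

/-- the residue quadratic form `q̄` on `V̄ = B(A)/Z(A)` is split: `V̄` has even
dimension `2k` and carries a totally isotropic subspace of dimension `k`. -/
def ResidueSplit (O : Subring F) (ord : F → ℤ) (q : ℕ) {n : ℕ}
    (C : Matrix (Fin n) (Fin n) F) : Prop :=
  ∃ k : ℕ, residueSpaceCard O C = q ^ (2 * k) ∧
    ∃ vs : Fin k → (Fin n → F),
      (∀ t, vs t ∈ BAset O C) ∧
      (∀ t, MemScale O 4 (Qval C (vs t))) ∧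
      (∀ s t, MemScale O 2 (dotProduct (vs s) (C.mulVec (vs t)))) ∧
      ∀ c : Fin k → F, (∀ t, c t ∈ O) → (∃ t, c t ≠ 0 ∧ ord (c t) = 0) →
        ¬ InZA O C (∑ t, c t • vs t)

/-- a square matrix over `F` of some size. -/
def SqB (F : Type) [Field F] : Type := (k : ℕ) × Matrix (Fin k) (Fin k) F

/-- total size of a list of square matrices. -/
def dims : List (SqB F) → ℕ
  | [] => 0
  | a :: t => a.1 + dims t

/-- orthogonal sum of a list of square matrices. -/
def listSum : (l : List (SqB F)) → Matrix (Fin (dims l)) (Fin (dims l)) F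
  | [] => 0
  | a :: t => orthSum a.2 (listSum t)

/-- a `2×2` block `2^i·[[2a, u],[u, 2b]]` with `a, b ∈ 𝔬`, `u ∈ 𝔬ˣ`. -/
def IsDagBlock (O : Subring F) (ord : F → ℤ) (π : F) (i : ℤ) (blk : SqB F) : Prop :=
  ∃ a u b : F, a ∈ O ∧ b ∈ O ∧ u ∈ O ∧ u ≠ 0 ∧ ord u = 0 ∧
    blk = ⟨2, π ^ i • !![2*a, u; u, 2*b]⟩

/-- The data of a semisimple quadratic `F`-algebra `E` (a quadratic field extension or
`F × F`), together with a generator `ω` of its maximal order `𝔬_E = 𝔬 + 𝔬ω`,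
the valuation `d` of the discriminant of `E/F`, and the invariant `ξ`. -/
structure QuadAlgebraAxioms (O : Subring F) (ord : F → ℤ)
    (E : Type) [CommRing E] [Algebra F E] (ω : E) (d : ℕ) (ξ : ℤ) : Prop where
  finrank_two : Module.finrank F E = 2
  reduced : ∀ x : E, x * x = 0 → x = 0
  indep : ∀ a b : F, algebraMap F E a + algebraMap F E b * ω = 0 → a = 0 ∧ b = 0
  trace_mem : Algebra.trace F E ω ∈ O
  norm_mem : Algebra.norm F ω ∈ O
  max_order : ∀ x : E, Algebra.trace F E x ∈ O → Algebra.norm F x ∈ O →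
    ∃ a b : F, a ∈ O ∧ b ∈ O ∧ x = algebraMap F E a + algebraMap F E b * ω
  disc_ne : (Algebra.trace F E ω) ^ 2 - 4 * Algebra.norm F ω ≠ 0
  disc_ord : ord ((Algebra.trace F E ω) ^ 2 - 4 * Algebra.norm F ω) = d
  xi_def : ξ = if (∃ x : E, x * x = x ∧ x ≠ 0 ∧ x ≠ 1) then 1 else if d = 0 then -1 else 0

/-- Gram matrix of the norm form on the order `𝔬_{E,f} = 𝔬 + 𝔬·ϖ^f ω` of conductor `f`,
with respect to the basis `(1, ϖ^f ω)`; here `T = tr(ω)` and `S = N(ω)`. -/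
def normGram (π T S : F) (f : ℕ) : Matrix (Fin 2) (Fin 2) F :=
  !![1, π ^ f * T / 2; π ^ f * T / 2, π ^ (2 * f) * S]

/-- the order `𝔬_{E,f} = 𝔬 + 𝔭^f 𝔬_E`, as a subset of `E`. -/
def orderSet (O : Subring F) (π : F) {E : Type} [CommRing E] [Algebra F E]
    (ω : E) (f : ℕ) : Set E :=
  {x | ∃ a b : F, a ∈ O ∧ b ∈ O ∧ x = algebraMap F E a + algebraMap F E (b * π ^ f) * ω}

/-- the set `V_N = {α ∈ 𝔬_{E,f} : 𝒩(α) ≡ 1 mod 𝔭^N}`. -/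
def normOneSet (O : Subring F) (ord : F → ℤ) (π : F) {E : Type} [CommRing E] [Algebra F E]
    (ω : E) (f N : ℕ) : Set E :=
  {x ∈ orderSet O π ω f |
    Algebra.norm F x - 1 = 0 ∨ (N : ℤ) ≤ ord (Algebra.norm F x - 1)}

/-- a rank‑2 lattice Gram matrix is indecomposable: not `GL₂(𝔬)`-equivalent to an
orthogonal sum of two rank‑1 lattices. -/
def Indecomposable2 (O : Subring F) (ord : F → ℤ) (G : Matrix (Fin 2) (Fin 2) F) : Prop :=
  ¬ ∃ B' : Matrix (Fin 2) (Fin 2) F, EquivO O ord G B' ∧ B' 0 1 = 0 ∧ B' 1 0 = 0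

/-!
The blocks of `Bⁱ` with GK entries `0`, `1` and `≤ 1` are unions of levels of `a`. An admissible
involution preserves `a` modulo `2`, so on such a block `σ` either preserves `a` or sends an index
to one with larger entry; restricting `σ` to the block (fixing the indices whose partner leaves
it) gives admissible data, and the valuation conditions of a reduced form are inherited.

What remains is nondegeneracy, which follows from the valuation conditions alone. For `M = 2B`,
eliminating a `σ`-pair by a Schur complement keeps all of them, because the correction
`B D⁻¹ C` is two steps deeper than the entries it modifies. When only fixed points are left,
there are at most two, with entries of different parity, and then the two terms of the `2 × 2`
determinant have valuations of different parity.

On the last block `(2, …, 2)` lies in `S`, so `GK ≥ (2, …, 2)` lexicographically, hence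
entrywise because `GK` is non-decreasing.
-/

structure IsOrd (ord : F → ℤ) : Prop where
  map_mul : ∀ x y : F, x ≠ 0 → y ≠ 0 → ord (x * y) = ord x + ord y
  min_le_map_add :
    ∀ x y : F, x ≠ 0 → y ≠ 0 → x + y ≠ 0 → min (ord x) (ord y) ≤ ord (x + y)

theorem LocalFieldAxioms.isOrd {O : Subring F} {ord : F → ℤ} {p q : ℕ}
    (h : LocalFieldAxioms O ord p q) : IsOrd ord :=
  ⟨h.ord_mul, h.min_le_ord_add⟩

namespace IsOrd

variable {ord : F → ℤ}

theorem map_one (hord : IsOrd ord) : ord (1 : F) = 0 := by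
  have := hord.map_mul 1 1 one_ne_zero one_ne_zero
  simp only [mul_one] at this
  omega

theorem map_neg (hord : IsOrd ord) {x : F} (hx : x ≠ 0) : ord (-x) = ord x := by
  have h1 := hord.map_mul (-1) (-1) (by simp) (by simp)
  have hx' := hord.map_mul (-1) x (by simp) hx
  simp only [mul_neg, mul_one, neg_neg, neg_one_mul, hord.map_one] at h1 hx'
  omega

theorem map_inv (hord : IsOrd ord) {x : F} (hx : x ≠ 0) : ord x⁻¹ = -ord x := by
  have := hord.map_mul x x⁻¹ hx (inv_ne_zero hx)
  rw [mul_inv_cancel₀ hx, hord.map_one] at this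
  omega

end IsOrd

/-- Valuations are doubled so that the bounds `(a i + a j) / 2` of reduced forms stay integral:
`TwiceOrdGE ord x k` reads `2 ord x ≥ k` (with `ord 0 = ∞`). -/
def TwiceOrdGE (ord : F → ℤ) (x : F) (k : ℤ) : Prop := x = 0 ∨ k ≤ 2 * ord x

def TwiceOrdEq (ord : F → ℤ) (x : F) (k : ℤ) : Prop := x ≠ 0 ∧ 2 * ord x = k

section TwiceOrd

variable {ord : F → ℤ} {x y : F} {k l : ℤ}

theorem TwiceOrdGE.mono (h : TwiceOrdGE ord x k) (hlk : l ≤ k) : TwiceOrdGE ord x l :=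
  h.imp_right hlk.trans

theorem TwiceOrdEq.ge (h : TwiceOrdEq ord x k) : TwiceOrdGE ord x k := Or.inr h.2.ge

theorem TwiceOrdGE.mul (hx : TwiceOrdGE ord x k) (hord : IsOrd ord) (hy : TwiceOrdGE ord y l) :
    TwiceOrdGE ord (x * y) (k + l) := by
  by_cases hx0 : x = 0
  · exact Or.inl (by simp [hx0])
  by_cases hy0 : y = 0
  · exact Or.inl (by simp [hy0])
  refine Or.inr ?_
  rw [hord.map_mul x y hx0 hy0]
  rcases hx with hx | hx <;> rcases hy with hy | hy <;> first | contradiction | omega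

theorem TwiceOrdEq.mul (hx : TwiceOrdEq ord x k) (hord : IsOrd ord) (hy : TwiceOrdEq ord y l) :
    TwiceOrdEq ord (x * y) (k + l) :=
  ⟨mul_ne_zero hx.1 hy.1, by rw [hord.map_mul x y hx.1 hy.1, ← hx.2, ← hy.2]; ring⟩

theorem TwiceOrdEq.inv (hx : TwiceOrdEq ord x k) (hord : IsOrd ord) : TwiceOrdEq ord x⁻¹ (-k) :=
  ⟨inv_ne_zero hx.1, by rw [hord.map_inv hx.1, ← hx.2]; ring⟩

theorem TwiceOrdGE.neg (hx : TwiceOrdGE ord x k) (hord : IsOrd ord) : TwiceOrdGE ord (-x) k := by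
  by_cases hx0 : x = 0
  · exact Or.inl (by simp [hx0])
  rw [TwiceOrdGE, hord.map_neg hx0, neg_eq_zero]
  exact hx

theorem TwiceOrdEq.neg (hx : TwiceOrdEq ord x k) (hord : IsOrd ord) : TwiceOrdEq ord (-x) k :=
  ⟨neg_ne_zero.mpr hx.1, by rw [hord.map_neg hx.1, hx.2]⟩

theorem TwiceOrdGE.add (hx : TwiceOrdGE ord x k) (hord : IsOrd ord) (hy : TwiceOrdGE ord y k) :
    TwiceOrdGE ord (x + y) k := by
  rcases hx with hx | hx
  · rwa [hx, zero_add]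
  rcases hy with hy | hy
  · rw [hy, add_zero]; exact Or.inr hx
  by_cases hx0 : x = 0
  · rw [hx0, zero_add]; exact Or.inr hy
  by_cases hy0 : y = 0
  · rw [hy0, add_zero]; exact Or.inr hx
  by_cases hxy : x + y = 0
  · exact Or.inl hxy
  have := hord.min_le_map_add x y hx0 hy0 hxy
  exact Or.inr (by omega)

theorem TwiceOrdGE.sub (hx : TwiceOrdGE ord x k) (hord : IsOrd ord) (hy : TwiceOrdGE ord y k) :
    TwiceOrdGE ord (x - y) k := by
  simpa only [sub_eq_add_neg] using hx.add hord (hy.neg hord)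

theorem TwiceOrdGE.sum {ι : Type*} {s : Finset ι} {f : ι → F} (hord : IsOrd ord)
    (h : ∀ i ∈ s, TwiceOrdGE ord (f i) k) : TwiceOrdGE ord (∑ i ∈ s, f i) k :=
  Finset.sum_induction f (TwiceOrdGE ord · k) (fun _ _ hx hy => hx.add hord hy) (Or.inl rfl) h

theorem TwiceOrdEq.add_of_lt (hx : TwiceOrdEq ord x k) (hord : IsOrd ord)
    (hy : TwiceOrdGE ord y l) (hkl : k < l) : TwiceOrdEq ord (x + y) k := by
  by_cases hy0 : y = 0
  · simpa [hy0] using hx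
  have hy' : k < 2 * ord y := by rcases hy with hy | hy <;> [contradiction; omega]
  have hxy : x + y ≠ 0 := fun h => by
    rw [eq_neg_of_add_eq_zero_right h, hord.map_neg hx.1, hx.2] at hy'
    exact lt_irrefl k hy'
  refine ⟨hxy, ?_⟩
  have h1 := hord.min_le_map_add x y hx.1 hy0 hxy
  have h2 := hord.min_le_map_add (x + y) (-y) hxy (neg_ne_zero.mpr hy0) (by simpa using hx.1)
  rw [add_neg_cancel_right, hord.map_neg hy0] at h2
  have := hx.2
  omega

theorem TwiceOrdEq.sub_of_lt (hx : TwiceOrdEq ord x k) (hord : IsOrd ord)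
    (hy : TwiceOrdGE ord y l) (hkl : k < l) : TwiceOrdEq ord (x - y) k := by
  simpa only [sub_eq_add_neg] using hx.add_of_lt hord (hy.neg hord) hkl

end TwiceOrd

/-- The valuation conditions on `M = 2 B` for a reduced form `B` of GK type `(a, π)`; of
admissibility only the parity condition on the fixed points of `π` is kept. -/
structure IsReducedPattern {ι : Type*} (ord : F → ℤ) (M : Matrix ι ι F) (a : ι → ℤ)
    (π : ι → ι) : Prop where
  isSymm : M.IsSymm
  involutive : Function.Involutive π
  diag : ∀ i, TwiceOrdGE ord (M i i) (2 * a i + 2)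
  diag_of_fixed : ∀ i, π i = i → TwiceOrdEq ord (M i i) (2 * a i + 2)
  pair : ∀ i, π i ≠ i → TwiceOrdEq ord (M i (π i)) (a i + a (π i))
  off : ∀ i j, j ≠ i → j ≠ π i → TwiceOrdGE ord (M i j) (a i + a j + 1)
  parity : ∀ i j, π i = i → π j = j → i ≠ j → a i % 2 ≠ a j % 2

namespace IsReducedPattern

variable {ord : F → ℤ}

theorem reindex {ι κ : Type*} {M : Matrix ι ι F} {a : ι → ℤ} {π : ι → ι}
    (hP : IsReducedPattern ord M a π) (e : ι ≃ κ) :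
    IsReducedPattern ord (M.submatrix e.symm e.symm) (a ∘ e.symm) (e ∘ π ∘ e.symm) where
  isSymm := hP.isSymm.submatrix _
  involutive x := by simp [hP.involutive _]
  diag i := hP.diag _
  diag_of_fixed i hi := hP.diag_of_fixed _ (e.eq_symm_apply.mpr hi)
  pair i hi := by simpa using hP.pair (e.symm i) (fun h => hi (e.eq_symm_apply.mp h))
  off i j hji hjπ := hP.off _ _ (by simpa using hji) (fun h => hjπ (e.symm_apply_eq.mp h))
  parity i j hi hj hij := hP.parity _ _ (e.eq_symm_apply.mpr hi) (e.eq_symm_apply.mpr hj)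
    (by simpa using hij)

theorem det_ne_zero_of_forall_fixed {n : ℕ} (hord : IsOrd ord) {M : Matrix (Fin n) (Fin n) F}
    {a : Fin n → ℤ} {π : Fin n → Fin n} (hP : IsReducedPattern ord M a π)
    (hfix : ∀ i, π i = i) : M.det ≠ 0 := by
  have hpar i j (hij : i ≠ j) := hP.parity i j (hfix i) (hfix j) hij
  rcases n with _ | _ | _ | n
  · simp
  · simpa using (hP.diag_of_fixed 0 (hfix 0)).1
  · rw [Matrix.det_fin_two, hP.isSymm.apply 0 1, sub_ne_zero]
    intro h
    have h01 := hpar 0 1 (by simp)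
    have hdiag := (hP.diag_of_fixed 0 (hfix 0)).mul hord (hP.diag_of_fixed 1 (hfix 1))
    by_cases h0 : M 0 1 = 0
    · exact hdiag.1 (by rw [h, h0, mul_zero])
    -- `2 ord (M 0 1 ^ 2) ≡ 0` but `2 ord (M 0 0 * M 1 1) ≡ 2 (mod 4)`
    have := hdiag.2
    rw [h, hord.map_mul _ _ h0 h0] at this
    omega
  · have := hpar ⟨0, by omega⟩ ⟨1, by omega⟩ (by simp)
    have := hpar ⟨0, by omega⟩ ⟨2, by omega⟩ (by simp)
    have := hpar ⟨1, by omega⟩ ⟨2, by omega⟩ (by simp)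
    omega

end IsReducedPattern

section Schur

variable {ord : F → ℤ}

theorem twiceOrdGE_inv_fin_two (hord : IsOrd ord) {D : Matrix (Fin 2) (Fin 2) F} {b : Fin 2 → ℤ}
    (hdet : TwiceOrdEq ord D.det (2 * (b 0 + b 1)))
    (hdiag : ∀ u, TwiceOrdGE ord (D u u) (2 * b u + 2))
    (h01 : TwiceOrdGE ord (D 0 1) (b 0 + b 1)) (h10 : TwiceOrdGE ord (D 1 0) (b 0 + b 1))
    (u v : Fin 2) : TwiceOrdGE ord (D⁻¹ u v) (-(b u + b v) + if u = v then 2 else 0) := by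
  have hinv := (hdet.inv hord).ge
  rw [Matrix.inv_def, Ring.inverse_eq_inv, Matrix.adjugate_fin_two]
  fin_cases u <;> fin_cases v <;> simp
  · exact (hinv.mul hord (hdiag 1)).mono (by omega)
  · exact ((hinv.mul hord h01).mono (by omega)).neg hord
  · exact ((hinv.mul hord h10).mono (by omega)).neg hord
  · exact (hinv.mul hord (hdiag 0)).mono (by omega)

theorem twiceOrdGE_mul_mul_apply (hord : IsOrd ord) {κ κ' τ : Type*} [Fintype τ]
    {B : Matrix κ τ F} {P : Matrix τ τ F} {C : Matrix τ κ' F} {b : τ → ℤ} {k l : ℤ}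
    {s : κ} {t : κ'} (hB : ∀ u, TwiceOrdGE ord (B s u) (k + b u))
    (hP : ∀ u v, TwiceOrdGE ord (P u v) (-(b u + b v)))
    (hC : ∀ v, TwiceOrdGE ord (C v t) (b v + l)) : TwiceOrdGE ord ((B * P * C) s t) (k + l) := by
  simp only [Matrix.mul_apply, Finset.sum_mul]
  refine TwiceOrdGE.sum hord fun v _ => TwiceOrdGE.sum hord fun u _ => ?_
  exact (((hB u).mul hord (hP u v)).mul hord (hC v)).mono (by omega)

/-- On the diagonal the two cross terms coincide, and their sum gains the factor `2`. -/
theorem twiceOrdGE_mul_mul_transpose_apply_self (hord : IsOrd ord) (hord2 : ord 2 = 1)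
    {κ : Type*} {B : Matrix κ (Fin 2) F} {P : Matrix (Fin 2) (Fin 2) F}
    {b : Fin 2 → ℤ} {k : ℤ} {s : κ} (hB : ∀ u, TwiceOrdGE ord (B s u) (k + b u))
    (hP : ∀ u v, TwiceOrdGE ord (P u v) (-(b u + b v) + if u = v then 2 else 0))
    (hPsymm : P 1 0 = P 0 1) : TwiceOrdGE ord ((B * P * B.transpose) s s) (2 * k + 2) := by
  have hexpand : (B * P * B.transpose) s s = B s 0 * P 0 0 * B s 0 + B s 1 * P 1 1 * B s 1 +
      2 * (B s 0 * P 0 1 * B s 1) := by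
    simp only [Matrix.mul_apply, Fin.sum_univ_two, Matrix.transpose_apply, hPsymm]
    ring
  have htwo : TwiceOrdGE ord (2 : F) 2 := Or.inr (by omega)
  have hdiag u : TwiceOrdGE ord (B s u * P u u * B s u) (2 * k + 2) :=
    (((hB u).mul hord (hP u u)).mul hord (hB u)).mono (by simp; omega)
  have hcross := htwo.mul hord (((hB 0).mul hord (hP 0 1)).mul hord (hB 1))
  rw [hexpand]
  exact ((hdiag 0).add hord (hdiag 1)).add hord (hcross.mono (by simp; omega))

end Schur

namespace IsReducedPattern

variable {ord : F → ℤ} {κ : Type*} {A : Matrix κ κ F} {B : Matrix κ (Fin 2) F}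
  {C : Matrix (Fin 2) κ F} {D : Matrix (Fin 2) (Fin 2) F} {a : κ ⊕ Fin 2 → ℤ}
  {π : κ → κ}

theorem twiceOrdEq_det_corner (hord : IsOrd ord)
    (hP : IsReducedPattern ord (Matrix.fromBlocks A B C D) a (Sum.map π Fin.rev)) :
    TwiceOrdEq ord D.det (2 * (a (.inr 0) + a (.inr 1))) := by
  have hD01 : TwiceOrdEq ord (D 0 1) (a (.inr 0) + a (.inr 1)) := by
    simpa using hP.pair (.inr 0) (by simp)
  have hD10 : D 1 0 = D 0 1 := by simpa using hP.isSymm.apply (.inr 0) (.inr 1)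
  have hdiag u : TwiceOrdGE ord (D u u) (2 * a (.inr u) + 2) := by simpa using hP.diag (.inr u)
  have := ((hD01.mul hord hD01).neg hord).add_of_lt hord ((hdiag 0).mul hord (hdiag 1)) (by omega)
  rw [Matrix.det_fin_two, hD10, sub_eq_neg_add]
  convert this using 1
  ring

theorem schur [Fintype κ] [DecidableEq κ] (hord : IsOrd ord) (hord2 : ord 2 = 1)
    (hP : IsReducedPattern ord (Matrix.fromBlocks A B C D) a (Sum.map π Fin.rev)) :
    IsReducedPattern ord (A - B * D⁻¹ * C) (a ∘ .inl) π := by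
  obtain ⟨hA, hBC, hCB, hD⟩ := Matrix.isSymm_fromBlocks_iff.mp hP.isSymm
  have hdet := hP.twiceOrdEq_det_corner hord
  have hDinv := twiceOrdGE_inv_fin_two hord hdet (fun u => by simpa using hP.diag (.inr u))
    (by simpa using (hP.pair (.inr 0) (by simp)).ge)
    (by simpa [add_comm] using (hP.pair (.inr 1) (by simp)).ge)
  have hB s u : TwiceOrdGE ord (B s u) ((a (.inl s) + 1) + a (.inr u)) :=
    (by simpa using hP.off (.inl s) (.inr u) (by simp) (by simp) : TwiceOrdGE ord _ _).mono
      (by omega)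
  have hC v t : TwiceOrdGE ord (C v t) (a (.inr v) + (a (.inl t) + 1)) :=
    (by simpa using hP.off (.inr v) (.inl t) (by simp) (by simp) : TwiceOrdGE ord _ _).mono
      (by omega)
  have hcorr s t : TwiceOrdGE ord ((B * D⁻¹ * C) s t) (a (.inl s) + a (.inl t) + 2) :=
    (twiceOrdGE_mul_mul_apply hord (hB s) (fun u v => (hDinv u v).mono (by split_ifs <;> omega))
      (fun v => hC v t)).mono (by omega)
  have hcorr_diag s : TwiceOrdGE ord ((B * D⁻¹ * C) s s) (2 * a (.inl s) + 4) := by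
    have hDinv_symm : (D⁻¹).IsSymm := by
      rw [Matrix.IsSymm, Matrix.transpose_nonsing_inv, hD.eq]
    rw [← hBC]
    exact (twiceOrdGE_mul_mul_transpose_apply_self hord hord2 (hB s) hDinv
      (hDinv_symm.apply 0 1)).mono (by omega)
  refine
    { isSymm := ?_
      involutive := fun s => Sum.inl_injective (hP.involutive (.inl s))
      diag := fun s => ?_
      diag_of_fixed := fun s hs => ?_
      pair := fun s hs => ?_
      off := fun s t hts htπ => ?_
      parity := fun s t hs ht hst =>
        hP.parity (.inl s) (.inl t) (by simp [hs]) (by simp [ht]) (by simpa using hst) }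
  · rw [Matrix.IsSymm, Matrix.transpose_sub, Matrix.transpose_mul, Matrix.transpose_mul,
      Matrix.transpose_nonsing_inv, hA.eq, hD.eq, hBC, hCB, Matrix.mul_assoc]
  · simpa using (hP.diag (.inl s)).sub hord ((hcorr_diag s).mono (by omega))
  · simpa using (hP.diag_of_fixed (.inl s) (by simp [hs])).sub_of_lt hord (hcorr_diag s)
      (by omega)
  · have hpair := hP.pair (.inl s) (by simpa using hs)
    rw [Sum.map_inl] at hpair
    simpa using hpair.sub_of_lt hord (hcorr s (π s)) (by omega)
  · simpa using (hP.off (.inl s) (.inl t) (by simpa using hts) (by simpa using htπ)).sub hord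
      ((hcorr s t).mono (by omega))

end IsReducedPattern

def pairSplitEquiv {ι : Type*} [DecidableEq ι] {i j : ι} (hij : i ≠ j) :
    ι ≃ {x // x ≠ i ∧ x ≠ j} ⊕ Fin 2 where
  toFun x := if hi : x = i then .inr 0 else if hj : x = j then .inr 1 else .inl ⟨x, hi, hj⟩
  invFun := Sum.elim Subtype.val ![i, j]
  left_inv x := by dsimp only; split_ifs <;> simp_all
  right_inv := by
    rintro (⟨x, hi, hj⟩ | u)
    · simp [hi, hj]
    · fin_cases u <;> simp [hij.symm]

theorem IsReducedPattern.det_ne_zero {ord : F → ℤ} (hord : IsOrd ord) (hord2 : ord 2 = 1)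
    {ι : Type*} [Fintype ι] [DecidableEq ι] {M : Matrix ι ι F} {a : ι → ℤ}
    {π : ι → ι}
    (hP : IsReducedPattern ord M a π) : M.det ≠ 0 := by
  induction hn : Fintype.card ι using Nat.strong_induction_on generalizing ι with
  | _ n ih =>
  by_cases hfix : ∀ i, π i = i
  · rw [← Matrix.det_submatrix_equiv_self (Fintype.equivFin ι).symm M]
    exact (hP.reindex _).det_ne_zero_of_forall_fixed hord (by simp [hfix])
  obtain ⟨i, hi⟩ := not_forall.mp hfix
  let e := pairSplitEquiv (Ne.symm hi)
  let π' (x : {x // x ≠ i ∧ x ≠ π i}) : {x // x ≠ i ∧ x ≠ π i} :=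
    ⟨π x, fun h => x.2.2 (by simp [← h, hP.involutive x]),
      fun h => x.2.1 (hP.involutive.injective h)⟩
  have hπ : e ∘ π ∘ e.symm = Sum.map π' Fin.rev := by
    funext y
    rcases y with x | u
    · have h1 : π x ≠ i := (π' x).2.1
      have h2 : π x ≠ π i := (π' x).2.2
      simp [e, π', pairSplitEquiv, h1, h2]
    · fin_cases u <;> simp [e, pairSplitEquiv, hP.involutive i, hi]
  have hP' := hP.reindex e
  rw [hπ, ← Matrix.fromBlocks_toBlocks (M.submatrix e.symm e.symm)] at hP'
  have hD := hP'.twiceOrdEq_det_corner hord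
  have hcard : Fintype.card {x // x ≠ i ∧ x ≠ π i} + 2 = n := by
    rw [← hn, Fintype.card_congr e, Fintype.card_sum, Fintype.card_fin]
  have := Matrix.invertibleOfIsUnitDet _ (isUnit_iff_ne_zero.mpr hD.1)
  rw [← Matrix.det_submatrix_equiv_self e.symm M,
    ← Matrix.fromBlocks_toBlocks (M.submatrix _ _), Matrix.det_fromBlocks₂₂,
    Matrix.invOf_eq_nonsing_inv]
  exact mul_ne_zero hD.1 (ih _ (by omega) (hP'.schur hord hord2) rfl)

theorem det_ne_zero_of_admissible {ord : F → ℤ} (hord : IsOrd ord) (h2 : (2 : F) ≠ 0)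
    (hord2 : ord 2 = 1) {n : ℕ} {B : Matrix (Fin n) (Fin n) F} {a : Fin n → ℕ}
    {σ : Fin n → Fin n} (hsymm : B.IsSymm)
    (hdiag_ge : ∀ i, B i i = 0 ∨ (a i : ℤ) ≤ ord (B i i)) (hadm : IsAdmissible a σ)
    (hcross : ∀ i, σ i ≠ i →
      2 * B i (σ i) ≠ 0 ∧ 2 * ord (2 * B i (σ i)) = (a i : ℤ) + (a (σ i) : ℤ))
    (hdiag : ∀ i, σ i = i → B i i ≠ 0 ∧ ord (B i i) = (a i : ℤ))
    (hoff : ∀ i j, j ≠ i → j ≠ σ i →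
      2 * B i j = 0 ∨ (a i : ℤ) + (a j : ℤ) < 2 * ord (2 * B i j)) :
    B.det ≠ 0 := by
  have hord_two_mul {x : F} (hx : x ≠ 0) : ord (2 * x) = 1 + ord x := by
    rw [hord.map_mul 2 x h2 hx, hord2]
  have hP : IsReducedPattern ord ((2 : F) • B) (fun i => (a i : ℤ)) σ :=
    { isSymm := by rw [Matrix.IsSymm, Matrix.transpose_smul, hsymm.eq]
      involutive := hadm.2.1
      diag := fun i => by
        by_cases h : B i i = 0
        · exact Or.inl (by simp [h])
        · refine Or.inr ?_
          rw [Matrix.smul_apply, smul_eq_mul, hord_two_mul h]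
          have := (hdiag_ge i).resolve_left h
          omega
      diag_of_fixed := fun i hi => by
        obtain ⟨hne, hval⟩ := hdiag i hi
        refine ⟨mul_ne_zero h2 hne, ?_⟩
        rw [Matrix.smul_apply, smul_eq_mul, hord_two_mul hne, hval]
        ring
      pair := fun i hi => by
        simp only [Matrix.smul_apply, smul_eq_mul]
        exact hcross i hi
      off := fun i j hji hjσ => by
        simp only [Matrix.smul_apply, smul_eq_mul]
        exact (hoff i j hji hjσ).imp_right fun h => by omega
      parity := fun i j hi hj hij => by have := hadm.2.2.2.1 i j hi hj hij; omega }
  have := hP.det_ne_zero hord hord2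
  rw [Matrix.det_smul] at this
  exact right_ne_zero_of_mul this

section RestrictInvolution

variable {α β : Type*} {σ : α → α} {e : β → α} {b : β}

def restrictInvolution (σ : α → α) (e : β → α) (b : β) : β :=
  if h : σ (e b) ∈ Set.range e then h.choose else b

theorem apply_restrictInvolution (h : σ (e b) ∈ Set.range e) :
    e (restrictInvolution σ e b) = σ (e b) := by
  rw [restrictInvolution, dif_pos h]
  exact h.choose_spec

theorem restrictInvolution_of_notMem (h : σ (e b) ∉ Set.range e) :
    restrictInvolution σ e b = b :=
  dif_neg h

theorem involutive_restrictInvolution (hσ : Function.Involutive σ)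
    (he : Function.Injective e) : Function.Involutive (restrictInvolution σ e) := by
  intro b
  by_cases h : σ (e b) ∈ Set.range e
  · have h' : σ (e (restrictInvolution σ e b)) ∈ Set.range e := by
      rw [apply_restrictInvolution h, hσ]
      exact ⟨b, rfl⟩
    apply he
    rw [apply_restrictInvolution h', apply_restrictInvolution h, hσ]
  · rw [restrictInvolution_of_notMem h, restrictInvolution_of_notMem h]

end RestrictInvolution

section Admissible

variable {n : ℕ} {a : Fin n → ℕ} {σ : Fin n → Fin n}

theorem IsAdmissible.mod_two_eq (h : IsAdmissible a σ) (i : Fin n) :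
    a (σ i) % 2 = a i % 2 := by
  obtain ⟨-, hσ, -, -, -, -, -, hmatch, -⟩ := h
  rcases lt_trichotomy (a i) (a (σ i)) with hlt | heq | hgt
  · exact (hmatch i hlt).1
  · rw [heq]
  · have := (hmatch (σ i) (by rwa [hσ])).1
    rw [hσ] at this
    exact this.symm

theorem isAdmissible_of_le_one (ha : Monotone a) (hσ : Function.Involutive σ)
    (hσa : ∀ i, a (σ i) = a i) (hle : ∀ i, a i ≤ 1)
    (hfix : ∀ i j, σ i = i → σ j = j → a i = a j → i = j) : IsAdmissible a σ := by
  have hnot i : ¬ a i < a (σ i) := by rw [hσa]; exact lt_irrefl _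
  have hnot' i : ¬ a (σ i) < a i := by rw [hσa]; exact lt_irrefl _
  refine ⟨ha, hσ, fun i j k hi hj hk => ?_, fun i j hi hj hij => ?_,
    fun i hi j hj hij => ?_, fun i _ _ hi _ => absurd hi (hnot' i),
    fun i j hij hi hj => hfix i j (hi.resolve_left (hnot i)) (hj.resolve_left (hnot j)) hij,
    fun i hi => absurd hi (hnot i), fun i hi => absurd hi (hnot' i)⟩
  · have := hle i; have := hle j; have := hle k
    by_cases hij : a i = a j
    · exact Or.inl (hfix i j hi hj hij)
    by_cases hik : a i = a k
    · exact Or.inr (Or.inl (hfix i k hi hk hik))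
    · exact Or.inr (Or.inr (hfix j k hj hk (by omega)))
  · have := hle i; have := hle j
    have : a i ≠ a j := fun h => hij (hfix i j hi hj h)
    omega
  · have := hle i; have := hle j
    omega

end Admissible

/-- Since `σ` preserves `a` modulo `2`, it preserves `a` inside the block, and an index whose
partner leaves the block lies in `P⁻`, so it may become a fixed point. -/
theorem IsReducedForm.submatrix_of_le_one {O : Subring F} {ord : F → ℤ} (hord : IsOrd ord)
    (h2 : (2 : F) ≠ 0) (hord2 : ord 2 = 1) {n r : ℕ} {B : Matrix (Fin n) (Fin n) F}
    {a : Fin n → ℕ} {σ : Fin n → Fin n} (hB : IsReducedForm O ord B a σ)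
    {e : Fin r → Fin n} (he : StrictMono e) {V : Set ℕ} (hV : ∀ v ∈ V, v ≤ 1)
    (hrange : ∀ t, t ∈ Set.range e ↔ a t ∈ V) :
    IsReducedForm O ord (B.submatrix e e) (a ∘ e) (restrictInvolution σ e) := by
  obtain ⟨⟨hsymm, hdiagO, h2O⟩, -, ⟨hmono, hdiag_ge, hoff_ge⟩, hadm, hcross, hdiag,
    hoff⟩ := hB
  set σ' := restrictInvolution σ e
  have hin {s} (h : σ (e s) ∈ Set.range e) : e (σ' s) = σ (e s) := apply_restrictInvolution h
  have hout {s} (h : σ (e s) ∉ Set.range e) : σ' s = s := restrictInvolution_of_notMem h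
  have hle s : a (e s) ≤ 1 := hV _ ((hrange _).mp ⟨s, rfl⟩)
  have hσa s : a (e (σ' s)) = a (e s) := by
    by_cases h : σ (e s) ∈ Set.range e
    · obtain ⟨t, ht⟩ := h
      have := hadm.mod_two_eq (e s)
      have := hle t
      rw [hin ⟨t, ht⟩, ← ht] at *
      have := hle s
      omega
    · rw [hout h]
  have hfixed s (hs : σ' s = s) : σ (e s) = e s ∨ a (e s) < a (σ (e s)) := by
    by_cases h : σ (e s) ∈ Set.range e
    · exact Or.inl (by rw [← hin h, hs])
    · have hne : a (σ (e s)) ≠ a (e s) := fun heq =>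
        h ((hrange _).mpr (heq ▸ (hrange _).mp ⟨s, rfl⟩))
      have := hadm.mod_two_eq (e s)
      have := hle s
      exact Or.inr (by omega)
  have hpair s (hs : σ' s ≠ s) : e (σ' s) = σ (e s) ∧ σ (e s) ≠ e s := by
    by_cases h : σ (e s) ∈ Set.range e
    · rw [← hin h]
      exact ⟨rfl, fun h' => hs (he.injective h')⟩
    · exact absurd (hout h) hs
  have hadm' : IsAdmissible (a ∘ e) σ' :=
    isAdmissible_of_le_one (hmono.comp he.monotone)
      (involutive_restrictInvolution hadm.2.1 he.injective) hσa hle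
      fun s t hs ht hst => he.injective
        (hadm.2.2.2.2.2.2.1 _ _ hst (hfixed s hs).symm (hfixed t ht).symm)
  have hcross' s (hs : σ' s ≠ s) : 2 * B (e s) (e (σ' s)) ≠ 0 ∧
      2 * ord (2 * B (e s) (e (σ' s))) = (a (e s) : ℤ) + (a (e (σ' s)) : ℤ) := by
    rw [(hpair s hs).1]
    exact hcross _ (hpair s hs).2
  have hdiag' s (hs : σ' s = s ∨ a (e s) < a (e (σ' s))) :
      B (e s) (e s) ≠ 0 ∧ ord (B (e s) (e s)) = (a (e s) : ℤ) :=
    hdiag _ (hfixed s (hs.resolve_right (by rw [hσa]; exact lt_irrefl _)))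
  have hoff' s t (hts : t ≠ s) (htσ : t ≠ σ' s) : 2 * B (e s) (e t) = 0 ∨
      (a (e s) : ℤ) + (a (e t) : ℤ) < 2 * ord (2 * B (e s) (e t)) := by
    refine hoff _ _ (he.injective.ne hts) fun h => htσ (he.injective ?_)
    rw [h, hin ⟨t, h⟩]
  exact ⟨⟨hsymm.submatrix e, fun s => hdiagO _, fun s t => h2O _ _⟩,
    det_ne_zero_of_admissible hord h2 hord2 (hsymm.submatrix e) (fun s => hdiag_ge _) hadm'
      hcross' (fun s hs => hdiag' s (Or.inl hs)) hoff',
    ⟨hmono.comp he.monotone, fun s => hdiag_ge _, fun s t => hoff_ge _ _⟩,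
    hadm', hcross', hdiag', hoff'⟩

theorem InS.mem_gkSet {O : Subring F} {ord : F → ℤ} (hord : IsOrd ord) {n : ℕ}
    {B : Matrix (Fin n) (Fin n) F} {a : Fin n → ℕ} (h : InS ord B a) : a ∈ GKSet O ord B := by
  refine ⟨B, ⟨1, ⟨fun i j => ?_, by simp, by simp [hord.map_one]⟩, by simp⟩, h⟩
  rw [Matrix.one_apply]
  split_ifs
  exacts [O.one_mem, O.zero_mem]

theorem InS.submatrix_const {ord : F → ℤ} {n k : ℕ} {B : Matrix (Fin n) (Fin n) F}
    {a : Fin n → ℕ} (h : InS ord B a) {e : Fin k → Fin n} {N : ℕ}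
    (hN : ∀ t, N ≤ a (e t)) :
    InS ord (B.submatrix e e) (fun _ => N) :=
  ⟨monotone_const, fun t => (h.2.1 (e t)).imp_right (le_trans (by exact_mod_cast hN t)),
    fun s t => (h.2.2 _ _).imp_right
      (le_trans (by dsimp only; have := hN s; have := hN t; omega))⟩

theorem IsGK.le_of_const_mem {O : Subring F} {ord : F → ℤ} {k : ℕ}
    {C : Matrix (Fin k) (Fin k) F} {c : Fin k → ℕ} (hc : IsGK O ord C c) {N : ℕ}
    (hN : (fun _ => N) ∈ GKSet O ord C) (t : Fin k) : N ≤ c t := by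
  obtain ⟨-, -, hmono, -⟩ := hc.1
  rcases hc.2 _ hN with h | ⟨t₀, hbefore, ht₀⟩
  · exact (congrFun h t).le
  · rcases lt_or_ge t t₀ with h | h
    · exact (hbefore t h).le
    · exact ht₀.le.trans (hmono h)

section IntervalEmbedding

variable {p r n : ℕ} {e : Fin r → Fin n}

theorem strictMono_of_val_eq_add (he : ∀ s, (e s : ℕ) = p + s) : StrictMono e :=
  fun s t hst => by rw [Fin.lt_def, he, he]; exact Nat.add_lt_add_left hst p

theorem mem_range_iff_of_val_eq_add (he : ∀ s, (e s : ℕ) = p + s) (t : Fin n) :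
    t ∈ Set.range e ↔ p ≤ t ∧ (t : ℕ) < p + r := by
  constructor
  · rintro ⟨s, rfl⟩
    rw [he]
    omega
  · intro ht
    exact ⟨⟨t - p, by omega⟩, Fin.ext (by rw [he]; dsimp only; omega)⟩

end IntervalEmbedding

theorem statement7 {F : Type} [Field F] (O : Subring F) (ord : F → ℤ) (q : ℕ)
    (hF : LocalFieldAxioms O ord 2 q) (hunram : ord (2 : F) = 1)
    {n : ℕ}
    (Bi : Matrix (Fin n) (Fin n) F) (a : Fin n → ℕ) (σ : Fin n → Fin n)
    (hred : IsReducedForm O ord Bi a σ)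
    (l m k : ℕ) (hn : n = l + m + k)
    (h0 : ∀ t : Fin n, a t = 0 ↔ (t : ℕ) < l)
    (h1 : ∀ t : Fin n, a t = 1 ↔ (l ≤ (t : ℕ) ∧ (t : ℕ) < l + m)) :
    (∃ σ0 : Fin l → Fin l,
      IsReducedForm O ord (leadBlock Bi l (by omega)) (fun _ => 0) σ0) ∧
    (∃ σ1 : Fin m → Fin m,
      IsReducedForm O ord
        (Bi.submatrix (fun t : Fin m => (⟨l + (t : ℕ), by omega⟩ : Fin n))
          (fun t : Fin m => (⟨l + (t : ℕ), by omega⟩ : Fin n)))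
        (fun _ => 1) σ1) ∧
    (∃ (a' : Fin (l + m) → ℕ) (σ' : Fin (l + m) → Fin (l + m)),
      IsReducedForm O ord (leadBlock Bi (l + m) (by omega)) a' σ' ∧ ∀ t, a' t ≤ 1) ∧
    ∀ c : Fin k → ℕ,
      IsGK O ord
        (Bi.submatrix (fun t : Fin k => (⟨l + m + (t : ℕ), by omega⟩ : Fin n))
          (fun t : Fin k => (⟨l + m + (t : ℕ), by omega⟩ : Fin n))) c →
      ∀ t, 2 ≤ c t := by
  have h2 : (2 : F) ≠ 0 := by
    have := hF.charZero
    exact two_ne_zero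
  have block {p r : ℕ} {e : Fin r → Fin n} (he : ∀ s, (e s : ℕ) = p + s) {V : Set ℕ}
      (hV : ∀ v ∈ V, v ≤ 1)
      (hrange : ∀ t : Fin n, a t ∈ V ↔ p ≤ t ∧ (t : ℕ) < p + r) :=
    hred.submatrix_of_le_one hF.isOrd h2 hunram (strictMono_of_val_eq_add he) hV
      fun t => (mem_range_iff_of_val_eq_add he t).trans (hrange t).symm
  have hcast {r : ℕ} (h : r ≤ n) (s : Fin r) : (Fin.castLE h s : ℕ) = 0 + s :=
    (zero_add _).symm
  have hB0 := block (hcast (by omega : l ≤ n)) (V := {0}) (by simp) fun t => by simpa using h0 t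
  have hB1 := block (e := fun t : Fin m => (⟨l + (t : ℕ), by omega⟩ : Fin n)) (fun _ => rfl)
    (V := {1}) (by simp) fun t => by simpa using h1 t
  have hB01 := block (hcast (by omega : l + m ≤ n)) (V := Set.Iic 1) (fun _ => id) fun t => by
    have := h0 t
    have := h1 t
    simp only [Set.mem_Iic]
    omega
  rw [show a ∘ Fin.castLE _ = fun _ => 0 from funext fun t => (h0 _).mpr t.2] at hB0
  rw [show (a ∘ fun t : Fin m => (⟨l + (t : ℕ), by omega⟩ : Fin n)) = fun _ => 1 from
    funext fun t => (h1 _).mpr (by simp)] at hB1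
  refine ⟨⟨_, hB0⟩, ⟨_, hB1⟩, ⟨_, _, hB01, fun t => ?_⟩, fun c hc t => ?_⟩
  · have h0t := h0 (Fin.castLE (by omega) t)
    have h1t := h1 (Fin.castLE (by omega) t)
    rw [Fin.val_castLE] at h0t h1t
    rw [Function.comp_apply]
    omega
  · have ha2 (s : Fin k) : 2 ≤ a ⟨l + m + s, by omega⟩ := by
      have h0s := h0 ⟨l + m + s, by omega⟩
      have h1s := h1 ⟨l + m + s, by omega⟩
      dsimp only at h0s h1s
      omega
    exact hc.le_of_const_mem ((hred.2.2.1.submatrix_const ha2).mem_gkSet hF.isOrd) t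

end GK
end
end

section
/- Let F be a finite extension of ℚ₂ with ring of integers 𝔬, maximal ideal 𝔭, residue cardinality q, and ramification index e over ℚ₂. For an integer f, the index of the subgroup 𝔬^{×2}·(1 + 𝔭^f) in 𝔬^× is: [𝔬^× : 𝔬^{×2}(1+𝔭^f)] = q^{⌊f/2⌋} if 0 < f ≤ 2e, and [𝔬^× : 𝔬^{×2}(1+𝔭^f)] = 2q^e if f > 2e. -/
open scoped Classical

noncomputable section

namespace GK

variable {F : Type} [Field F]

/-!
Write `Uₘ = 1 + 𝔭ᵐ`. Squaring is an endomorphism of the finite group `𝔬ˣ / U_f` whose range is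
`𝔬ˣ² U_f / U_f` and whose kernel is `K / U_f` with `K = {u | u² ∈ U_f}`, so the index in question
equals `[K : U_f]`. From `u² - 1 = (u - 1)² + 2 (u - 1)` and `ord 2 = e` one gets `K = U_⌈f/2⌉`
when `f ≤ 2e` and `K = ±U_(f-e)` when `f > 2e`. Since `[Uₘ : Uₘ₊₁] = q` for `m ≥ 1`, this gives
`q ^ (f - ⌈f/2⌉) = q ^ ⌊f/2⌋` and `2 q ^ e` respectively.
-/

theorem _root_.Subgroup.index_closure_squares_union {G : Type*} [CommGroup G]
    (N : Subgroup G) [N.FiniteIndex] :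
    (Subgroup.closure ({g : G | ∃ v, g = v * v} ∪ N)).index =
      N.relIndex (N.comap (powMonoidHom 2)) := by
  set sq := powMonoidHom (α := G ⧸ N) 2
  have hclosure : Subgroup.closure ({g : G | ∃ v, g = v * v} ∪ N) =
      sq.range.comap (QuotientGroup.mk' N) := by
    refine le_antisymm (Subgroup.closure_le _ |>.2 ?_) fun g ⟨x, hx⟩ => ?_
    · rintro g (⟨v, rfl⟩ | hg)
      · exact ⟨v, by simp [sq, pow_two]⟩
      · exact ⟨1, by simp [(QuotientGroup.eq_one_iff g).2 hg]⟩
    · obtain ⟨v, rfl⟩ := QuotientGroup.mk_surjective x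
      have hn : (v * v)⁻¹ * g ∈ N := by
        simpa [sq, pow_two, ← QuotientGroup.mk_mul, QuotientGroup.eq] using hx
      rw [← mul_inv_cancel_left (v * v) g]
      exact mul_mem (Subgroup.subset_closure (.inl ⟨v, rfl⟩)) (Subgroup.subset_closure (.inr hn))
  have hcomap : N.comap (powMonoidHom 2) = sq.ker.comap (QuotientGroup.mk' N) := by
    ext g; simp [sq, ← QuotientGroup.mk_pow]
  have hle : N ≤ N.comap (powMonoidHom 2) := fun g hg => by simpa using N.pow_mem hg 2
  have hcard : sq.range.index * Nat.card sq.range = N.index := sq.range.index_mul_card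
  rw [← N.relIndex_mul_index hle, hcomap,
    Subgroup.index_comap_of_surjective _ (QuotientGroup.mk'_surjective N),
    Subgroup.index_ker] at hcard
  rw [hclosure, hcomap, Subgroup.index_comap_of_surjective _ (QuotientGroup.mk'_surjective N)]
  exact Nat.eq_of_mul_eq_mul_right Nat.card_pos hcard

namespace LocalFieldAxioms

variable {O : Subring F} {ord : F → ℤ} {p q : ℕ}

theorem ord_one (hF : LocalFieldAxioms O ord p q) : ord (1 : F) = 0 := by
  have h := hF.ord_mul 1 1 one_ne_zero one_ne_zero
  rw [mul_one] at h
  omega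

theorem ord_neg (hF : LocalFieldAxioms O ord p q) {x : F} (hx : x ≠ 0) : ord (-x) = ord x := by
  have h := hF.ord_mul (-1) (-1) (by simp) (by simp)
  have h' := hF.ord_mul (-1) x (by simp) hx
  rw [neg_mul_neg, one_mul, hF.ord_one] at h
  rw [neg_one_mul] at h'
  omega

theorem ord_pow (hF : LocalFieldAxioms O ord p q) {x : F} (hx : x ≠ 0) (n : ℕ) :
    ord (x ^ n) = n * ord x := by
  induction n with
  | zero => simpa using hF.ord_one
  | succ n ih => rw [pow_succ, hF.ord_mul _ _ (pow_ne_zero _ hx) hx, ih]; push_cast; ring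

/-- The power `𝔭ⁿ` of the maximal ideal. -/
def powIdeal (hF : LocalFieldAxioms O ord p q) (n : ℕ) : AddSubgroup F where
  carrier := {x | x = 0 ∨ (n : ℤ) ≤ ord x}
  zero_mem' := .inl rfl
  add_mem' {x y} hx hy := by
    by_cases hx0 : x = 0
    · simpa [hx0] using hy
    by_cases hy0 : y = 0
    · simpa [hy0] using hx
    by_cases hxy : x + y = 0
    · exact .inl hxy
    have := hF.min_le_ord_add x y hx0 hy0 hxy
    exact .inr (le_trans (le_min (hx.resolve_left hx0) (hy.resolve_left hy0)) this)
  neg_mem' {x} hx := by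
    by_cases hx0 : x = 0
    · simp [hx0]
    · exact .inr ((hF.ord_neg hx0).symm ▸ hx.resolve_left hx0)

theorem mem_powIdeal (hF : LocalFieldAxioms O ord p q) {n : ℕ} {x : F} :
    x ∈ hF.powIdeal n ↔ x = 0 ∨ (n : ℤ) ≤ ord x := Iff.rfl

theorem mem_powIdeal_zero (hF : LocalFieldAxioms O ord p q) {x : F} :
    x ∈ hF.powIdeal 0 ↔ x ∈ O := by
  rw [hF.mem_integers]; rfl

theorem powIdeal_antitone (hF : LocalFieldAxioms O ord p q) : Antitone hF.powIdeal :=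
  fun _ _ hmn _ hx => hx.imp_right (le_trans (by exact_mod_cast hmn))

theorem mul_mem_powIdeal (hF : LocalFieldAxioms O ord p q) {m n : ℕ} {x y : F}
    (hx : x ∈ hF.powIdeal m) (hy : y ∈ hF.powIdeal n) : x * y ∈ hF.powIdeal (m + n) := by
  by_cases hx0 : x = 0
  · simp [hx0]
  by_cases hy0 : y = 0
  · simp [hy0]
  refine .inr ?_
  rw [hF.ord_mul x y hx0 hy0]
  push_cast
  exact add_le_add (hx.resolve_left hx0) (hy.resolve_left hy0)

theorem pow_mul_mem_powIdeal_iff (hF : LocalFieldAxioms O ord p q) {π x : F} (hπ : π ≠ 0)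
    (hπ1 : ord π = 1) {m n : ℕ} : π ^ m * x ∈ hF.powIdeal (m + n) ↔ x ∈ hF.powIdeal n := by
  by_cases hx0 : x = 0
  · simp [hx0]
  simp only [mem_powIdeal, mul_eq_zero, pow_eq_zero_iff', hπ, hx0, false_and, false_or,
    hF.ord_mul _ _ (pow_ne_zero m hπ) hx0, hF.ord_pow hπ, hπ1]
  push_cast
  omega

theorem ord_add_eq_of_mem_powIdeal (hF : LocalFieldAxioms O ord p q) {x y : F} {n : ℕ}
    (hx : x ≠ 0) (hxn : ord x < n) (hy : y ∈ hF.powIdeal n) :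
    x + y ≠ 0 ∧ ord (x + y) = ord x := by
  by_cases hy0 : y = 0
  · simp [hy0, hx]
  have hlt : ord x < ord y := hxn.trans_le (hy.resolve_left hy0)
  have hxy : x + y ≠ 0 := fun h => by
    rw [eq_neg_of_add_eq_zero_right h, hF.ord_neg hx] at hlt
    exact lt_irrefl _ hlt
  refine ⟨hxy, le_antisymm ?_ ?_⟩
  · have h := hF.min_le_ord_add (x + y) (-y) hxy (neg_ne_zero.2 hy0) (by simpa using hx)
    rw [add_neg_cancel_right, hF.ord_neg hy0] at h
    rcases min_le_iff.1 h with h | h <;> omega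
  · simpa [min_eq_left hlt.le] using hF.min_le_ord_add x y hx hy0 hxy

theorem ord_coe_unit (hF : LocalFieldAxioms O ord p q) (u : Oˣ) : ord ((u : O) : F) = 0 := by
  have hne : ∀ v : Oˣ, ((v : O) : F) ≠ 0 := fun v h => v.ne_zero (Subtype.ext h)
  have hnn : ∀ v : Oˣ, 0 ≤ ord ((v : O) : F) := fun v =>
    ((hF.mem_integers _).1 (v : O).2).resolve_left (hne v)
  have h := hF.ord_mul _ _ (hne u) (hne u⁻¹)
  rw [← Subring.coe_mul, Units.mul_inv, Subring.coe_one, hF.ord_one] at h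
  linarith [hnn u, hnn u⁻¹]

theorem isUnit_of_sub_mem_powIdeal_one (hF : LocalFieldAxioms O ord p q) (x : O) (u : Oˣ)
    (h : (x : F) - (u : O) ∈ hF.powIdeal 1) : IsUnit x := by
  obtain ⟨hx0, hx⟩ := hF.ord_add_eq_of_mem_powIdeal (fun h => u.ne_zero (Subtype.ext h))
    (by simp [hF.ord_coe_unit u]) h
  rw [add_sub_cancel, hF.ord_coe_unit] at hx
  rw [add_sub_cancel] at hx0
  have hinv : (x : F)⁻¹ ∈ O := (hF.mem_integers _).2 <| .inr <| by
    have h := hF.ord_mul _ _ hx0 (inv_ne_zero hx0)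
    rw [mul_inv_cancel₀ hx0, hF.ord_one, hx] at h
    omega
  exact IsUnit.of_mul_eq_one ⟨_, hinv⟩ (Subtype.ext (mul_inv_cancel₀ hx0))

theorem mul_coe_unit_mem_powIdeal_iff (hF : LocalFieldAxioms O ord p q) {n : ℕ} {x : F}
    (u : Oˣ) : x * (u : O) ∈ hF.powIdeal n ↔ x ∈ hF.powIdeal n := by
  have hu : ((u : O) : F) ≠ 0 := fun h => u.ne_zero (Subtype.ext h)
  by_cases hx0 : x = 0
  · simp [hx0]
  simp [mem_powIdeal, hx0, hu, hF.ord_mul _ _ hx0 hu, hF.ord_coe_unit u]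

/-- The congruence subgroup `1 + 𝔭ᵐ` of `𝔬ˣ` (all of `𝔬ˣ` when `m = 0`). -/
def principalUnits (hF : LocalFieldAxioms O ord p q) (m : ℕ) : Subgroup Oˣ where
  carrier := {u | ((u : O) : F) - 1 ∈ hF.powIdeal m}
  one_mem' := by simp
  mul_mem' {a b} ha hb := by
    have hab : ((a * b : Oˣ) : O) - (1 : F) = (a : O) * (((b : O) : F) - 1) + ((a : O) - 1) := by
      push_cast; ring
    rw [Set.mem_ofPred_eq, hab]
    refine add_mem ?_ ha
    simpa using hF.mul_mem_powIdeal (hF.mem_powIdeal_zero.2 (a : O).2) hb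
  inv_mem' {a} ha := by
    have ha' : ((a⁻¹ : Oˣ) : O) - (1 : F) = -((((a : O) : F) - 1) * ((a⁻¹ : Oˣ) : O)) := by
      have : ((a : O) : F) * ((a⁻¹ : Oˣ) : O) = 1 := by
        rw [← Subring.coe_mul, Units.mul_inv, Subring.coe_one]
      linear_combination this
    rw [Set.mem_ofPred_eq, ha', neg_mem_iff, hF.mul_coe_unit_mem_powIdeal_iff]
    exact ha

theorem mem_principalUnits (hF : LocalFieldAxioms O ord p q) {m : ℕ} {u : Oˣ} :
    u ∈ hF.principalUnits m ↔ ((u : O) : F) - 1 ∈ hF.powIdeal m := Iff.rfl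

theorem inv_mul_mem_principalUnits (hF : LocalFieldAxioms O ord p q) {m : ℕ} {u w : Oˣ} :
    u⁻¹ * w ∈ hF.principalUnits m ↔ ((w : O) : F) - (u : O) ∈ hF.powIdeal m := by
  rw [mem_principalUnits, ← hF.mul_coe_unit_mem_powIdeal_iff u]
  have : ((u : O) : F) * ((u⁻¹ : Oˣ) : O) = 1 := by
    rw [← Subring.coe_mul, Units.mul_inv, Subring.coe_one]
  congr! 1
  push_cast
  linear_combination ((w : O) : F) * this

theorem principalUnits_antitone (hF : LocalFieldAxioms O ord p q) :
    Antitone hF.principalUnits :=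
  fun _ _ hmn _ hu => hF.powIdeal_antitone hmn hu

/-- With `π` a uniformizer and `s` running over residue representatives, the units `1 + s πᵐ`
represent `(1 + 𝔭ᵐ) / (1 + 𝔭ᵐ⁺¹)`. -/
theorem relIndex_principalUnits_succ (hF : LocalFieldAxioms O ord p q) {m : ℕ} (hm : 1 ≤ m) :
    (hF.principalUnits (m + 1)).relIndex (hF.principalUnits m) = q := by
  obtain ⟨π, hπ0, hπ1⟩ := hF.ord_surjective 1
  obtain ⟨S, hS, hSO, hSrep, hSsep⟩ := hF.residue_card
  have hπO : π ∈ O := (hF.mem_integers π).2 (.inr (by omega))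
  have hdigit (s : S) : π ^ m * (s : F) ∈ hF.powIdeal (m + 0) :=
    (hF.pow_mul_mem_powIdeal_iff hπ0 hπ1).2 (hF.mem_powIdeal_zero.2 (hSO _ s.2))
  have hunit (s : S) : IsUnit (⟨1 + π ^ m * s, add_mem (one_mem O)
      (mul_mem (pow_mem hπO m) (hSO _ s.2))⟩ : O) :=
    hF.isUnit_of_sub_mem_powIdeal_one _ 1 <| by
      simpa using hF.powIdeal_antitone (by omega) (hdigit s)
  let rep (s : S) : hF.principalUnits m :=
    ⟨(hunit s).unit, by simpa [mem_principalUnits] using hdigit s⟩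
  have hrep (s : S) : (((rep s : Oˣ) : O) : F) = 1 + π ^ m * s := rfl
  have hclass {a b : hF.principalUnits m} :
      (a : hF.principalUnits m ⧸ (hF.principalUnits (m + 1)).subgroupOf _) = b ↔
        (((b : Oˣ) : O) : F) - ((a : Oˣ) : O) ∈ hF.powIdeal (m + 1) := by
    rw [QuotientGroup.eq, Subgroup.mem_subgroupOf, Subgroup.coe_mul, Subgroup.coe_inv,
      inv_mul_mem_principalUnits]
  have hbij : Function.Bijective fun s : S =>
      (rep s : hF.principalUnits m ⧸ (hF.principalUnits (m + 1)).subgroupOf _) := by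
    refine ⟨fun s t hst => Subtype.ext ?_, fun x => ?_⟩
    · rw [hclass, hrep, hrep, show 1 + π ^ m * (t : F) - (1 + π ^ m * s) =
        π ^ m * (t - s) by ring, hF.pow_mul_mem_powIdeal_iff hπ0 hπ1] at hst
      exact (hSsep _ t.2 _ s.2 hst).symm
    obtain ⟨u, rfl⟩ := QuotientGroup.mk_surjective x
    obtain ⟨y, hy, hyu⟩ : ∃ y ∈ O, (((u : Oˣ) : O) : F) - 1 = π ^ m * y := by
      refine ⟨((((u : Oˣ) : O) : F) - 1) / π ^ m, ?_, by field_simp⟩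
      rw [← hF.mem_powIdeal_zero, ← hF.pow_mul_mem_powIdeal_iff hπ0 hπ1, mul_div_cancel₀ _
        (pow_ne_zero m hπ0)]
      exact u.2
    obtain ⟨s, hs, hys⟩ := hSrep y hy
    refine ⟨⟨s, hs⟩, hclass.2 ?_⟩
    rw [hrep, show (((u : Oˣ) : O) : F) - (1 + π ^ m * s) = π ^ m * (y - s) by
      linear_combination hyu]
    exact (hF.pow_mul_mem_powIdeal_iff hπ0 hπ1).2 hys
  rw [Subgroup.relIndex, Subgroup.index, ← Nat.card_eq_of_bijective _ hbij,
    Nat.card_eq_fintype_card, Fintype.card_coe, hS]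

theorem relIndex_principalUnits (hF : LocalFieldAxioms O ord p q) {m n : ℕ} (hm : 1 ≤ m)
    (hmn : m ≤ n) : (hF.principalUnits n).relIndex (hF.principalUnits m) = q ^ (n - m) := by
  induction n, hmn using Nat.le_induction with
  | base => simp
  | succ n hmn ih =>
    rw [← Subgroup.relIndex_mul_relIndex _ _ _ (hF.principalUnits_antitone n.le_succ)
      (hF.principalUnits_antitone hmn), hF.relIndex_principalUnits_succ (hm.trans hmn), ih,
      Nat.sub_add_comm hmn, pow_succ']

theorem finite_quotient_principalUnits_one (hF : LocalFieldAxioms O ord p q) :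
    Finite (Oˣ ⧸ hF.principalUnits 1) := by
  obtain ⟨S, -, hSO, hSrep, -⟩ := hF.residue_card
  let rep (s : S) : Oˣ ⧸ hF.principalUnits 1 :=
    if h : IsUnit (⟨s, hSO _ s.2⟩ : O) then h.unit else 1
  refine Finite.of_surjective rep fun x => ?_
  obtain ⟨u, rfl⟩ := QuotientGroup.mk_surjective x
  obtain ⟨s, hs, hus⟩ := hSrep _ (u : O).2
  have hunit : IsUnit (⟨s, hSO _ hs⟩ : O) :=
    hF.isUnit_of_sub_mem_powIdeal_one _ u (by simpa using neg_mem (show _ ∈ hF.powIdeal 1 from hus))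
  refine ⟨⟨s, hs⟩, ?_⟩
  simp only [rep, dif_pos hunit]
  exact QuotientGroup.eq.2 (hF.inv_mul_mem_principalUnits.2 hus)

theorem finiteIndex_principalUnits (hF : LocalFieldAxioms O ord p q) {m : ℕ} (hm : 1 ≤ m) :
    (hF.principalUnits m).FiniteIndex := by
  have := hF.finite_quotient_principalUnits_one
  obtain ⟨S, hS, -, hSrep, -⟩ := hF.residue_card
  have hq : q ≠ 0 := by
    obtain ⟨s, hs, -⟩ := hSrep 0 (zero_mem O)
    exact hS ▸ (Finset.card_pos.2 ⟨s, hs⟩).ne'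
  refine ⟨?_⟩
  rw [← Subgroup.relIndex_mul_index (hF.principalUnits_antitone hm),
    hF.relIndex_principalUnits le_rfl hm]
  exact mul_ne_zero (pow_ne_zero _ hq) Subgroup.index_ne_zero_of_finite

theorem two_ne_zero (hF : LocalFieldAxioms O ord p q) : (2 : F) ≠ 0 :=
  have := hF.charZero
  _root_.two_ne_zero

theorem sq_sub_one_mem_powIdeal (hF : LocalFieldAxioms O ord p q) {e k f : ℕ}
    (he : ord (2 : F) = e) {x : F} (hx : x - 1 ∈ hF.powIdeal k) (hfk : f ≤ 2 * k)
    (hfe : f ≤ k + e) : x ^ 2 - 1 ∈ hF.powIdeal f := by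
  have h2 : (2 : F) ∈ hF.powIdeal e := .inr he.ge
  rw [show x ^ 2 - 1 = (x - 1) * (x - 1) + 2 * (x - 1) by ring]
  exact add_mem (hF.powIdeal_antitone (by omega) (hF.mul_mem_powIdeal hx hx))
    (hF.powIdeal_antitone (by omega) (hF.mul_mem_powIdeal h2 hx))

/-- If `ord (x - 1) < e` then `x + 1 = (x - 1) + 2` has the same valuation, so
`ord (x ^ 2 - 1) = 2 ord (x - 1)`. -/
theorem sub_one_mem_powIdeal_of_sq_sub_one_mem (hF : LocalFieldAxioms O ord p q) {e f : ℕ}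
    (he : ord (2 : F) = e) (hf : f ≤ 2 * e) {x : F} (h : x ^ 2 - 1 ∈ hF.powIdeal f) :
    x - 1 ∈ hF.powIdeal ((f + 1) / 2) := by
  by_contra hx
  simp only [mem_powIdeal, not_or, not_le] at hx
  obtain ⟨hx0, hlt⟩ := hx
  obtain ⟨hx0', hord⟩ := hF.ord_add_eq_of_mem_powIdeal (n := e) hx0 (by omega)
    (show (2 : F) ∈ hF.powIdeal e from .inr he.ge)
  rw [show x - 1 + 2 = x + 1 by ring] at hx0' hord
  rw [show x ^ 2 - 1 = (x - 1) * (x + 1) by ring] at h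
  rcases h with h | h
  · exact mul_ne_zero hx0 hx0' h
  · rw [hF.ord_mul _ _ hx0 hx0', hord] at h
    omega

/-- `(x + 1) - (x - 1) = 2` forces `min (ord (x - 1)) (ord (x + 1)) ≤ e`. -/
theorem sub_one_mem_or_add_one_mem_powIdeal_of_sq_sub_one_mem
    (hF : LocalFieldAxioms O ord p q) {e f : ℕ} (he : ord (2 : F) = e) {x : F} (hxO : x ∈ O)
    (h : x ^ 2 - 1 ∈ hF.powIdeal f) :
    x - 1 ∈ hF.powIdeal (f - e) ∨ x + 1 ∈ hF.powIdeal (f - e) := by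
  by_cases hx1 : x - 1 = 0
  · exact .inl (.inl hx1)
  by_cases hx1' : x + 1 = 0
  · exact .inr (.inl hx1')
  have hnn {y : F} (hy : y ∈ O) (hy0 : y ≠ 0) : 0 ≤ ord y :=
    ((hF.mem_integers y).1 hy).resolve_left hy0
  have ha := hnn (sub_mem hxO (one_mem O)) hx1
  have hb := hnn (add_mem hxO (one_mem O)) hx1'
  have h2 : x + 1 + -(x - 1) = 2 := by ring
  have hmin := hF.min_le_ord_add (x + 1) (-(x - 1)) hx1' (neg_ne_zero.2 hx1)
    (h2 ▸ hF.two_ne_zero)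
  rw [hF.ord_neg hx1, h2, he] at hmin
  rw [show x ^ 2 - 1 = (x - 1) * (x + 1) by ring] at h
  have hab := (h.resolve_left (mul_ne_zero hx1 hx1')).trans_eq (hF.ord_mul _ _ hx1 hx1')
  rcases min_le_iff.1 hmin with hmin | hmin
  · exact .inl (.inr (by omega))
  · exact .inr (.inr (by omega))

theorem mem_comap_sq_principalUnits (hF : LocalFieldAxioms O ord p q) {f : ℕ} {u : Oˣ} :
    u ∈ (hF.principalUnits f).comap (powMonoidHom 2) ↔
      ((u : O) : F) ^ 2 - 1 ∈ hF.powIdeal f := by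
  simp [mem_principalUnits]

theorem comap_sq_principalUnits_of_le (hF : LocalFieldAxioms O ord p q) {e f : ℕ}
    (he : ord (2 : F) = e) (hf : f ≤ 2 * e) :
    (hF.principalUnits f).comap (powMonoidHom 2) = hF.principalUnits ((f + 1) / 2) := by
  ext u
  rw [mem_comap_sq_principalUnits, mem_principalUnits]
  exact ⟨hF.sub_one_mem_powIdeal_of_sq_sub_one_mem he hf,
    fun h => hF.sq_sub_one_mem_powIdeal he h (by omega) (by omega)⟩

theorem mem_comap_sq_principalUnits_of_lt (hF : LocalFieldAxioms O ord p q) {e f : ℕ}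
    (he : ord (2 : F) = e) (hf : 2 * e < f) {u : Oˣ} :
    u ∈ (hF.principalUnits f).comap (powMonoidHom 2) ↔
      u ∈ hF.principalUnits (f - e) ∨ -u ∈ hF.principalUnits (f - e) := by
  have hsq {v : Oˣ} (hv : v ∈ hF.principalUnits (f - e)) :
      v ∈ (hF.principalUnits f).comap (powMonoidHom 2) :=
    hF.mem_comap_sq_principalUnits.2 (hF.sq_sub_one_mem_powIdeal he hv (by omega) (by omega))
  refine ⟨fun h => ?_, fun h => h.elim hsq fun h => by simpa using hsq h⟩
  rw [mem_principalUnits, mem_principalUnits, Units.val_neg, Subring.coe_neg,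
    show -((u : O) : F) - 1 = -(((u : O) : F) + 1) by ring, neg_mem_iff]
  exact hF.sub_one_mem_or_add_one_mem_powIdeal_of_sq_sub_one_mem he (u : O).2
    (hF.mem_comap_sq_principalUnits.1 h)

/-- `-1` is a square root of `1` that does not lie in `1 + 𝔭^(f - e)`, because
`ord (-1 - 1) = e < f - e`. -/
theorem relIndex_comap_sq_principalUnits (hF : LocalFieldAxioms O ord p q) {e f : ℕ}
    (he : ord (2 : F) = e) (hf : 2 * e < f) :
    (hF.principalUnits (f - e)).relIndex ((hF.principalUnits f).comap (powMonoidHom 2)) = 2 := by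
  have hneg_one : (-1 : Oˣ) ∉ hF.principalUnits (f - e) := by
    rw [mem_principalUnits, Units.val_neg, Units.val_one, Subring.coe_neg, Subring.coe_one,
      show (-1 - 1 : F) = -2 by ring, neg_mem_iff, mem_powIdeal, he]
    exact not_or.2 ⟨hF.two_ne_zero, by omega⟩
  refine Subgroup.relIndex_eq_two_iff.2 ⟨-1, by simp, fun u hu => ?_⟩
  rw [mul_neg_one, xor_iff_or_and_not_and]
  refine ⟨((hF.mem_comap_sq_principalUnits_of_lt he hf).1 hu).symm, fun ⟨h, h'⟩ => ?_⟩
  exact hneg_one (by simpa using mul_mem h (inv_mem h'))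

end LocalFieldAxioms

/-- The index `[𝔬^× : 𝔬^{×2}(1+𝔭^f)]` over a finite extension of `ℚ₂`
with ramification index `e`. -/
theorem statement12 {F : Type} [Field F] (O : Subring F) (ord : F → ℤ) (q e : ℕ)
    (hF : LocalFieldAxioms O ord 2 q) (he : ord (2 : F) = e)
    (f : ℕ) :
    (0 < f → f ≤ 2 * e →
      (Subgroup.closure ({u : (↥O)ˣ | ∃ v : (↥O)ˣ, u = v * v} ∪
        {u : (↥O)ˣ | ((u : ↥O) : F) - 1 = 0 ∨ (f : ℤ) ≤ ord (((u : ↥O) : F) - 1)})).index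
        = q ^ (f / 2)) ∧
    (2 * e < f →
      (Subgroup.closure ({u : (↥O)ˣ | ∃ v : (↥O)ˣ, u = v * v} ∪
        {u : (↥O)ˣ | ((u : ↥O) : F) - 1 = 0 ∨ (f : ℤ) ≤ ord (((u : ↥O) : F) - 1)})).index
        = 2 * q ^ e) := by
  have hU : {u : Oˣ | ((u : O) : F) - 1 = 0 ∨ (f : ℤ) ≤ ord (((u : O) : F) - 1)} =
      (hF.principalUnits f : Set Oˣ) := rfl
  rw [hU]
  refine ⟨fun hf0 hf => ?_, fun hf => ?_⟩
  · have := hF.finiteIndex_principalUnits hf0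
    rw [Subgroup.index_closure_squares_union, hF.comap_sq_principalUnits_of_le he hf,
      hF.relIndex_principalUnits (by omega) (by omega)]
    congr 1
    omega
  · have := hF.finiteIndex_principalUnits (m := f) (by omega)
    rw [Subgroup.index_closure_squares_union, ← Subgroup.relIndex_mul_relIndex _
      (hF.principalUnits (f - e)) _ (hF.principalUnits_antitone (Nat.sub_le f e)) ?_,
      hF.relIndex_principalUnits (by omega) (Nat.sub_le f e),
      hF.relIndex_comap_sq_principalUnits he hf, Nat.sub_sub_self (by omega), mul_comm]
    intro u hu
    exact (hF.mem_comap_sq_principalUnits_of_lt he hf).2 (.inl hu)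

end GK
end
end
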